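/- arXiv:2210.10257 — 2 statements merged into one kernel-verified Lean document; each statement's English description precedes it below -/
import Mathlib

section
/- Let a, b ∈ ℚ and suppose f(x) = x⁴ + a·x² + b is irreducible over ℚ. Then f(x²) = x⁸ + a·x⁴ + b is reducible over ℚ if and only if there exist r, s ∈ ℚ such that b = r⁴ and (s² − 4r)² = 4(2r² + a). (This last condition is the statement that s equals one of the four nested radicals √(±4r ± 2√(2r²+a)), i.e. that at least one of these four expressions is rational.) -/
open Polynomial

/-!
Write `g = f(X²)`. If `p` is an irreducible factor of `g` and `β` a root of `p`, then `β²` is a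
root of `f`, so `deg f ∣ deg p`; hence a reducible `g` is a product `p * q` of monic quartics.
As `g(-X) = g`, `p` divides `p(-X)` or `q(-X)`. In the first case `p = h(X²)` with `h ∣ f`, which
forces `g` to be irreducible; so `g = p(X) p(-X)`. Comparing coefficients, with
`p = X⁴ + c₃X³ + c₂X² + c₁X + c₀`, gives `c₃² = 2c₂`, `c₁² = 2c₀c₂`, `b = c₀²` and
`a = 2c₀ + c₂² - 2c₁c₃`, so `r = c₁/c₃`, `s = c₃` work. Conversely `r`, `s` give the factor
`X⁴ + sX³ + (s²/2)X² + srX + r²`.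
-/

namespace Polynomial

section CommSemiring

variable {R : Type*} [CommSemiring R]

lemma irreducible_expand_of_expand_dvd {n : ℕ} (hn : n ≠ 0) {f h : R[X]} (hf : Irreducible f)
    (hh : Irreducible (expand R n h)) (hdvd : expand R n h ∣ expand R n f) :
    Irreducible (expand R n f) := by
  obtain ⟨q, hq⟩ := hdvd
  have hfac : f = contract n q * h := by
    rw [← contract_mul_expand hn, mul_comm, ← hq, contract_expand n hn]
  rcases hf.isUnit_or_isUnit hfac with hu | hu
  · exact ((hfac ▸ (associated_unit_mul_left h _ hu).symm).map (expand R n)).irreducible hh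
  · exact absurd (hu.map (expand R n)) hh.not_isUnit

end CommSemiring

section CommRing

variable {R : Type*} [CommRing R]

lemma coeff_comp_neg_X (p : R[X]) (n : ℕ) : (p.comp (-X)).coeff n = (-1) ^ n * p.coeff n := by
  rw [show (-X : R[X]) = C (-1) * X by simp, comp_C_mul_X_coeff, mul_comm]

lemma expand_two_comp_neg_X (f : R[X]) : (expand R 2 f).comp (-X) = expand R 2 f := by
  rw [expand_eq_comp_X_pow, comp_assoc]
  simp

lemma expand_contract_two_of_comp_neg_X_eq [NoZeroDivisors R] [NeZero (2 : R)] {p : R[X]}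
    (hp : p.comp (-X) = p) : expand R 2 (contract 2 p) = p := by
  ext n
  rw [coeff_expand two_pos, coeff_contract two_ne_zero]
  split_ifs with hn
  · rw [Nat.div_mul_cancel hn]
  · have hcoeff := congrArg (coeff · n) hp
    have hodd : Odd n := Nat.odd_iff.mpr (by omega)
    simp only [coeff_comp_neg_X, hodd.neg_one_pow] at hcoeff
    have htwo : (2 : R) * p.coeff n = 0 := by linear_combination -hcoeff
    exact ((mul_eq_zero.mp htwo).resolve_left two_ne_zero).symm

noncomputable def monicQuartic (c₃ c₂ c₁ c₀ : R) : R[X] :=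
  X ^ 4 + C c₃ * X ^ 3 + C c₂ * X ^ 2 + C c₁ * X + C c₀

variable {c₃ c₂ c₁ c₀ : R}

lemma monicQuartic_comp_neg_X :
    (monicQuartic c₃ c₂ c₁ c₀).comp (-X) = monicQuartic (-c₃) c₂ (-c₁) c₀ := by
  simp only [monicQuartic, add_comp, mul_comp, pow_comp, X_comp, C_comp, map_neg]
  ring

lemma monicQuartic_mul_monicQuartic_neg :
    monicQuartic c₃ c₂ c₁ c₀ * monicQuartic (-c₃) c₂ (-c₁) c₀ =
      X ^ 8 + C (2 * c₂ - c₃ ^ 2) * X ^ 6 + C (2 * c₀ + c₂ ^ 2 - 2 * c₁ * c₃) * X ^ 4 +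
        C (2 * c₀ * c₂ - c₁ ^ 2) * X ^ 2 + C (c₀ ^ 2) := by
  simp only [monicQuartic, map_add, map_sub, map_mul, map_neg, map_pow, map_ofNat]
  ring

lemma natDegree_monicQuartic [Nontrivial R] : (monicQuartic c₃ c₂ c₁ c₀).natDegree = 4 := by
  unfold monicQuartic
  compute_degree!

lemma monic_monicQuartic : (monicQuartic c₃ c₂ c₁ c₀).Monic := by
  unfold monicQuartic
  monicity!

lemma not_isUnit_monicQuartic [Nontrivial R] : ¬IsUnit (monicQuartic c₃ c₂ c₁ c₀) := fun hu => by
  simpa [natDegree_monicQuartic] using congrArg natDegree (monic_monicQuartic.isUnit_iff.mp hu)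

lemma Monic.eq_monicQuartic {p : R[X]} (hm : p.Monic) (hd : p.natDegree = 4) :
    p = monicQuartic (p.coeff 3) (p.coeff 2) (p.coeff 1) (p.coeff 0) := by
  have h4 : p.coeff 4 = 1 := hd ▸ hm.coeff_natDegree
  conv_lhs => rw [p.as_sum_range' 5 (by omega)]
  simp only [monicQuartic, Finset.sum_range_succ, Finset.sum_range_zero,
    ← C_mul_X_pow_eq_monomial, h4, C_1]
  ring

end CommRing

lemma Irreducible.natDegree_dvd_of_dvd_comp {K : Type*} [Field K] {f p q : K[X]}
    (hf : Irreducible f) (hp : Irreducible p) (hdvd : p ∣ f.comp q) :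
    f.natDegree ∣ p.natDegree := by
  have := Fact.mk hp
  let pb := AdjoinRoot.powerBasis hp.ne_zero
  have := pb.finite
  have hroot : aeval (aeval (AdjoinRoot.root p) q) f = 0 := by
    rw [← aeval_comp, AdjoinRoot.aeval_eq, AdjoinRoot.mk_eq_zero]
    exact hdvd
  rw [minpoly.Irreducible.eq_minpoly hf hroot,
    natDegree_C_mul (leadingCoeff_ne_zero.mpr hf.ne_zero), ← AdjoinRoot.powerBasis_dim hp.ne_zero,
    ← pb.finrank]
  exact minpoly.degree_dvd (.of_finite K _)

variable {K : Type*} [Field K] [NeZero (2 : K)]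

theorem exists_eq_mul_comp_neg_X_of_not_irreducible_expand {f : K[X]}
    (hf : Irreducible f) (hfm : f.Monic) (hfd : Even f.natDegree)
    (hred : ¬Irreducible (expand K 2 f)) :
    ∃ p : K[X], p.Monic ∧ p.natDegree = f.natDegree ∧ p.comp (-X) ≠ p ∧
      expand K 2 f = p * p.comp (-X) := by
  set g := expand K 2 f
  have hgm : g.Monic := hfm.expand two_pos
  have hgd : g.natDegree = f.natDegree * 2 := natDegree_expand 2 f
  have hf0 : 0 < f.natDegree := hf.natDegree_pos
  have hnot_even {p : K[X]} (hp : Irreducible p) (hpg : p ∣ g) : p.comp (-X) ≠ p := by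
    intro hev
    rw [← expand_contract_two_of_comp_neg_X_eq hev] at hp hpg
    exact hred (irreducible_expand_of_expand_dvd two_ne_zero hf hp hpg)
  have hmonic {p : K[X]} (hpm : p.Monic) (hpd : p.natDegree = f.natDegree) :
      (p.comp (-X)).Monic := by
    simp [Monic, comp_neg_X_leadingCoeff_eq, hpm.leadingCoeff, hpd, hfd.neg_one_pow]
  have hgu : ¬IsUnit g := fun hu => by
    have := natDegree_eq_zero_of_isUnit hu
    omega
  obtain ⟨p, hpm, hpi, hpg⟩ := exists_monic_irreducible_factor g hgu
  have hpd : p.natDegree = f.natDegree := by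
    obtain ⟨k, hk⟩ := hf.natDegree_dvd_of_dvd_comp hpi hpg
    have hle : p.natDegree ≤ f.natDegree * 2 := hgd ▸ natDegree_le_of_dvd hpg hgm.ne_zero
    have hne : p.natDegree ≠ f.natDegree * 2 := fun h =>
      hred (eq_of_monic_of_dvd_of_natDegree_le hpm hgm hpg (by omega) ▸ hpi)
    have hk2 : k ≤ 2 := Nat.le_of_mul_le_mul_left (hk ▸ hle) hf0
    have := hpi.natDegree_pos
    interval_cases k <;> omega
  obtain ⟨q, hq⟩ := hpg
  have hqm : q.Monic := hpm.of_mul_monic_left (hq ▸ hgm)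
  have hqd : q.natDegree = f.natDegree := by
    have := natDegree_mul hpm.ne_zero hqm.ne_zero
    rw [← hq] at this
    omega
  have hpdvd : p ∣ p.comp (-X) * q.comp (-X) := by
    rw [← mul_comp, ← hq, expand_two_comp_neg_X]
    exact ⟨q, hq⟩
  rcases hpi.prime.dvd_or_dvd hpdvd with hpp | hpq
  · exact absurd (eq_of_monic_of_dvd_of_natDegree_le hpm (hmonic hpm hpd) hpp
      (natDegree_eq_of_degree_eq degree_comp_neg_X).le) (hnot_even hpi ⟨q, hq⟩)
  · have hqp : q.comp (-X) = p := eq_of_monic_of_dvd_of_natDegree_le hpm (hmonic hqm hqd) hpq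
      (by rw [natDegree_eq_of_degree_eq degree_comp_neg_X, hqd, hpd])
    refine ⟨p, hpm, hpd, hnot_even hpi ⟨q, hq⟩, ?_⟩
    rw [hq, ← hqp, comp_neg_X_comp_neg_X]

theorem exists_root_params_of_eq_mul_comp_neg_X {a b : K} {p : K[X]} (hpm : p.Monic)
    (hpd : p.natDegree = 4) (hsym : p.comp (-X) ≠ p)
    (h : X ^ 8 + C a * X ^ 4 + C b = p * p.comp (-X)) :
    ∃ r s : K, b = r ^ 4 ∧ (s ^ 2 - 4 * r) ^ 2 = 4 * (2 * r ^ 2 + a) := by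
  rw [hpm.eq_monicQuartic hpd] at h hsym
  generalize p.coeff 3 = c₃, p.coeff 2 = c₂, p.coeff 1 = c₁, p.coeff 0 = c₀ at h hsym
  rw [monicQuartic_comp_neg_X, monicQuartic_mul_monicQuartic_neg] at h
  have h6 := congrArg (coeff · 6) h
  have h4 := congrArg (coeff · 4) h
  have h2 := congrArg (coeff · 2) h
  have h0 := congrArg (coeff · 0) h
  simp only [coeff_add, coeff_C_mul_X_pow, coeff_X_pow, coeff_C] at h6 h4 h2 h0
  norm_num at h6 h4 h2 h0
  have hc₃ : c₃ ≠ 0 := by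
    rintro rfl
    have hc₂ : c₂ = 0 := by simpa [two_ne_zero] using h6
    have hc₁ : c₁ = 0 := by simpa [hc₂] using h2
    subst hc₂ hc₁
    simp [monicQuartic_comp_neg_X] at hsym
  have hc₀ : c₀ = (c₁ / c₃) ^ 2 := by
    field_simp
    linear_combination c₀ * h6 - h2
  refine ⟨c₁ / c₃, c₃, by rw [h0, hc₀]; ring, ?_⟩
  rw [h4, hc₀]
  field_simp
  linear_combination c₃ ^ 2 * (c₃ ^ 2 + 2 * c₂) * h6

theorem biquadratic_eq_monicQuartic_mul_monicQuartic_neg {a b r s : K} (hb : b = r ^ 4)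
    (hs : (s ^ 2 - 4 * r) ^ 2 = 4 * (2 * r ^ 2 + a)) :
    X ^ 8 + C a * X ^ 4 + C b =
      monicQuartic s (s ^ 2 / 2) (s * r) (r ^ 2) *
        monicQuartic (-s) (s ^ 2 / 2) (-(s * r)) (r ^ 2) := by
  have htwo : (2 : K) ≠ 0 := two_ne_zero
  have e₆ : 2 * (s ^ 2 / 2) - s ^ 2 = 0 := by field_simp; ring
  have e₄ : 2 * r ^ 2 + (s ^ 2 / 2) ^ 2 - 2 * (s * r) * s = a := by
    field_simp
    linear_combination hs
  have e₂ : 2 * r ^ 2 * (s ^ 2 / 2) - (s * r) ^ 2 = 0 := by field_simp; ring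
  rw [monicQuartic_mul_monicQuartic_neg, e₆, e₄, e₂, hb, ← pow_mul]
  simp

end Polynomial

theorem stmt1 (a b : ℚ)
    (hf : Irreducible (X ^ 4 + C a * X ^ 2 + C b : ℚ[X])) :
    ¬ Irreducible (X ^ 8 + C a * X ^ 4 + C b : ℚ[X]) ↔
      ∃ r s : ℚ, b = r ^ 4 ∧ (s ^ 2 - 4 * r) ^ 2 = 4 * (2 * r ^ 2 + a) := by
  have hg : (X ^ 8 + C a * X ^ 4 + C b : ℚ[X]) = expand ℚ 2 (X ^ 4 + C a * X ^ 2 + C b) := by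
    simp only [map_add, map_mul, map_pow, expand_X, expand_C]
    ring
  have hfd : (X ^ 4 + C a * X ^ 2 + C b : ℚ[X]).natDegree = 4 := by compute_degree!
  constructor
  · intro hred
    rw [hg] at hred
    obtain ⟨p, hpm, hpd, hsym, hfac⟩ := exists_eq_mul_comp_neg_X_of_not_irreducible_expand hf
      (by monicity!) (by rw [hfd]; decide) hred
    exact exists_root_params_of_eq_mul_comp_neg_X hpm (hpd.trans hfd) hsym (hg.trans hfac)
  · rintro ⟨r, s, hb, hs⟩ hirr
    rw [biquadratic_eq_monicQuartic_mul_monicQuartic_neg hb hs] at hirr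
    exact (of_irreducible_mul hirr).elim not_isUnit_monicQuartic not_isUnit_monicQuartic
end

section
/- Let a, b, p, q, t ∈ ℚ with a ≠ 0, a = p·q·t, and b = (p² + q²)·t − 2, and suppose g(x) = x⁴ + a·x³ + b·x² + a·x + 1 is irreducible over ℚ. Then: (1) a² − 4b + 8 is not a square in ℚ; (2) p²t is a square in ℚ if and only if q²t is a square in ℚ, and this holds if and only if b + 2 + 2a is a square in ℚ; (3) neither p²t·(q²t − 4) nor q²t·(p²t − 4) is a square in ℚ. -/
/-!
Substituting `y = x + x⁻¹` gives `g(x) = x² (y² + a y + b - 2)`, so `g` splits into two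
palindromic quadratics as soon as the discriminant `a² - 4b + 8` of the quadratic in `y` is a
square; this is (1). For `a = pqt`, `b = (p² + q²)t - 2` one has `b + 2 ± 2a = (p ± q)² t`, and
`p + q ≠ 0` because for `q = -p` the discriminant is the square `(p²t - 4)²`; hence every
quantity in (2) is a square exactly when `t` is. For (3), if `p²t(q²t - 4)` is a square then so is
the discriminant `q²t(q²t - 4)` of `z² - (q²t - 2)z + 1`; its roots `c`, `d = c⁻¹` are the constant
terms of a factorization `(x² + vc x + c)(x² + v x + d)` of `g` with `v = pqt / (1 + c)`.
-/

open Polynomial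

noncomputable def palindromicQuartic {R : Type*} [CommRing R] (a b : R) : R[X] :=
  X ^ 4 + C a * X ^ 3 + C b * X ^ 2 + C a * X + 1

section Factorization

variable {R : Type*} [CommRing R] [IsDomain R]

lemma not_isUnit_monic_quadratic (u c : R) : ¬ IsUnit (X ^ 2 + C u * X + C c : R[X]) := by
  intro hunit
  have hdeg : (X ^ 2 + C u * X + C c : R[X]).natDegree = 2 := by compute_degree!
  have := natDegree_eq_zero_of_isUnit hunit
  omega

lemma not_irreducible_palindromicQuartic_of_factors {a b : R} (u v c d : R)
    (h₃ : u + v = a) (h₂ : c + d + u * v = b) (h₁ : u * d + v * c = a) (h₀ : c * d = 1) :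
    ¬ Irreducible (palindromicQuartic a b) := by
  intro hirr
  have hfac : palindromicQuartic a b = (X ^ 2 + C u * X + C c) * (X ^ 2 + C v * X + C d) := by
    have hexpand : (X ^ 2 + C u * X + C c) * (X ^ 2 + C v * X + C d) = X ^ 4 + C (u + v) * X ^ 3
        + C (c + d + u * v) * X ^ 2 + C (u * d + v * c) * X + C (c * d) := by
      simp only [C_add, C_mul]
      ring
    rw [hexpand, h₃, h₂, h₁, h₀, map_one, palindromicQuartic]
  rcases hirr.isUnit_or_isUnit hfac with hunit | hunit
  exacts [not_isUnit_monic_quadratic u c hunit, not_isUnit_monic_quadratic v d hunit]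

end Factorization

section Field

variable {K : Type*} [Field K]

lemma not_irreducible_palindromicQuartic_of_discrim_eq_sq (h2 : (2 : K) ≠ 0) {a b r : K}
    (hr : a ^ 2 - 4 * b + 8 = r ^ 2) : ¬ Irreducible (palindromicQuartic a b) :=
  not_irreducible_palindromicQuartic_of_factors ((a + r) / 2) ((a - r) / 2) 1 1
    (by field_simp; ring) (by field_simp; linear_combination hr) (by field_simp; ring) (one_mul 1)

lemma not_irreducible_palindromicQuartic_of_sq_mul_eq_sq (h2 : (2 : K) ≠ 0) {p q t r : K}
    (hp : p ≠ 0) (hqt : q ^ 2 * t ≠ 0) (hr : p ^ 2 * t * (q ^ 2 * t - 4) = r ^ 2) :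
    ¬ Irreducible (palindromicQuartic (p * q * t) ((p ^ 2 + q ^ 2) * t - 2)) := by
  obtain ⟨s, hs⟩ : ∃ s, q ^ 2 * t * (q ^ 2 * t - 4) = s ^ 2 :=
    ⟨q * r / p, by rw [div_pow, eq_div_iff (pow_ne_zero 2 hp)]; linear_combination q ^ 2 * hr⟩
  set c := (q ^ 2 * t - 2 + s) / 2
  set d := (q ^ 2 * t - 2 - s) / 2
  have hsum : c + d = q ^ 2 * t - 2 := by simp only [c, d]; field_simp; ring
  have hprod : c * d = 1 := by simp only [c, d]; field_simp; linear_combination hs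
  have hc : 1 + c ≠ 0 := fun h ↦ hqt (by linear_combination (1 + d) * h - hsum - hprod)
  set v := p * q * t / (1 + c)
  have hv : v * (1 + c) = p * q * t := div_mul_cancel₀ _ hc
  -- `(1 + c)² = c (c + d + 2) = c q²t`, using `c d = 1`
  have hv2 : v ^ 2 * c = p ^ 2 * t := mul_right_cancel₀ hqt <| by
    linear_combination (v * (1 + c) + p * q * t) * hv - v ^ 2 * c * hsum + v ^ 2 * hprod
  exact not_irreducible_palindromicQuartic_of_factors (v * c) v c d (by linear_combination hv)
    (by linear_combination hv2 + hsum) (by linear_combination v * hprod + hv) hprod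

lemma exists_sq_eq_sq_mul_iff {x : K} (t : K) (hx : x ≠ 0) :
    (∃ r, x ^ 2 * t = r ^ 2) ↔ ∃ r, t = r ^ 2 :=
  ⟨fun ⟨r, hr⟩ ↦ ⟨r / x, by field_simp; linear_combination hr⟩,
    fun ⟨r, hr⟩ ↦ ⟨x * r, by rw [hr]; ring⟩⟩

end Field

theorem stmt16 (a b p q t : ℚ) (ha : a ≠ 0) (hapqt : a = p * q * t)
    (hb : b = (p ^ 2 + q ^ 2) * t - 2)
    (hg : Irreducible (X ^ 4 + C a * X ^ 3 + C b * X ^ 2 + C a * X + 1 : ℚ[X])) :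
    (¬ ∃ r : ℚ, a ^ 2 - 4 * b + 8 = r ^ 2) ∧
    ((∃ r : ℚ, p ^ 2 * t = r ^ 2) ↔ (∃ r : ℚ, q ^ 2 * t = r ^ 2)) ∧
    ((∃ r : ℚ, p ^ 2 * t = r ^ 2) ↔ (∃ r : ℚ, b + 2 + 2 * a = r ^ 2)) ∧
    (¬ ∃ r : ℚ, p ^ 2 * t * (q ^ 2 * t - 4) = r ^ 2) ∧
    (¬ ∃ r : ℚ, q ^ 2 * t * (p ^ 2 * t - 4) = r ^ 2) := by
  change Irreducible (palindromicQuartic a b) at hg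
  subst hapqt hb
  have hp : p ≠ 0 := by rintro rfl; simp at ha
  have hq : q ≠ 0 := by rintro rfl; simp at ha
  have ht : t ≠ 0 := by rintro rfl; simp at ha
  have hdiscr : ¬ ∃ r : ℚ, (p * q * t) ^ 2 - 4 * ((p ^ 2 + q ^ 2) * t - 2) + 8 = r ^ 2 :=
    fun ⟨r, hr⟩ ↦ not_irreducible_palindromicQuartic_of_discrim_eq_sq two_ne_zero hr hg
  have hpq : p + q ≠ 0 := fun h ↦
    hdiscr ⟨p ^ 2 * t - 4, by linear_combination (q - p) * t * (p ^ 2 * t - 4) * h⟩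
  have hg' : Irreducible (palindromicQuartic (q * p * t) ((q ^ 2 + p ^ 2) * t - 2)) := by
    convert hg using 2 <;> ring
  have hsum : (p ^ 2 + q ^ 2) * t - 2 + 2 + 2 * (p * q * t) = (p + q) ^ 2 * t := by ring
  refine ⟨hdiscr, ?_, ?_, ?_, ?_⟩
  · rw [exists_sq_eq_sq_mul_iff t hp, exists_sq_eq_sq_mul_iff t hq]
  · rw [exists_sq_eq_sq_mul_iff t hp, hsum, exists_sq_eq_sq_mul_iff t hpq]
  · exact fun ⟨r, hr⟩ ↦ not_irreducible_palindromicQuartic_of_sq_mul_eq_sq two_ne_zero hp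
      (mul_ne_zero (pow_ne_zero 2 hq) ht) hr hg
  · exact fun ⟨r, hr⟩ ↦ not_irreducible_palindromicQuartic_of_sq_mul_eq_sq two_ne_zero hq
      (mul_ne_zero (pow_ne_zero 2 hp) ht) hr hg'
end
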